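/- arXiv:1712.09652 — 4 statements merged into one kernel-verified Lean document; each statement's English description precedes it below -/
import Mathlib

section
/- Suppose θ = 0 is the unique minimizer of f_∞ over ℝ^d. Then the point (θ, x) = (0, 0) is a saddle point of ψ_∞, i.e. ψ_∞(θ, 0) ≥ ψ_∞(0, 0) ≥ ψ_∞(0, x) for all θ, x ∈ ℝ^d; moreover x = 0 is the only point x̄ ∈ span{φ(S)} for which there exists θ̄ ∈ ℝ^d with (θ̄, x̄) a saddle point of ψ_∞. -/
open Matrix

set_option maxHeartbeats 1000000

lemma aux_le_zero (A B : ℝ) (hB : 0 ≤ B)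
    (h : ∀ t : ℝ, 0 < t → t ≤ 1 → A ≤ t * B) : A ≤ 0 := by
  by_contra hA
  push_neg at hA
  set t : ℝ := min 1 (A / (2 * (B + 1))) with ht
  have htpos : 0 < t := lt_min one_pos (by positivity)
  have ht1 : t ≤ 1 := min_le_left _ _
  have h2 : t * (2 * (B + 1)) ≤ A := by
    have := min_le_right 1 (A / (2 * (B + 1)))
    rw [← ht] at this
    exact (le_div_iff₀ (by positivity)).mp this
  have h3 := h t htpos ht1
  have h4 : 0 ≤ t * B := mul_nonneg htpos.le hB
  linarith

/-- If `θ = 0` is the unique minimizer of `f_∞` over `ℝ^d`, then `(0,0)`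
is a saddle point of `ψ_∞`, and `x = 0` is the only point `x̄ ∈ span{φ(S)}` for which there
exists `θ̄` with `(θ̄, x̄)` a saddle point of `ψ_∞`. -/
theorem stmt_15
    (n d : ℕ) (hn : 0 < n) (hd : 0 < d)
    (Φ : Matrix (Fin n) (Fin d) ℝ) (hΦ : Φ ≠ 0)
    (ξ : Fin n → ℝ) (hξ : ∀ i, 0 < ξ i)
    (Ξ : Matrix (Fin n) (Fin n) ℝ) (hΞ : Ξ = Matrix.diagonal ξ)
    (proj : (Fin n → ℝ) → (Fin n → ℝ))
    (hproj_mem : ∀ v : Fin n → ℝ, ∃ θ : Fin d → ℝ, proj v = Φ.mulVec θ)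
    (hproj_orth : ∀ (v : Fin n → ℝ) (θ : Fin d → ℝ),
      Φ.mulVec θ ⬝ᵥ Ξ.mulVec (v - proj v) = 0)
    (P : Matrix (Fin n) (Fin n) ℝ)
    (pinf : (Fin d → ℝ) → ℝ)
    (hpinf_conv : ConvexOn ℝ Set.univ pinf) (hpinf_diff : Differentiable ℝ pinf)
    -- `ψ_∞(θ,x) = ⟨Φx, (P − I)Φθ⟩_ξ − ½‖Φx‖²_ξ + p_∞(θ)`
    (ψinf : (Fin d → ℝ) → (Fin d → ℝ) → ℝ)
    (hψinf : ∀ θ x : Fin d → ℝ,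
      ψinf θ x = Φ.mulVec x ⬝ᵥ Ξ.mulVec (((P - 1) * Φ).mulVec θ)
        - (1 / 2) * (Φ.mulVec x ⬝ᵥ Ξ.mulVec (Φ.mulVec x)) + pinf θ)
    -- `f_∞(θ) = ½‖Π_ξ(P − I)Φθ‖²_ξ + p_∞(θ)`
    (finf : (Fin d → ℝ) → ℝ)
    (hfinf : ∀ θ : Fin d → ℝ,
      finf θ = (1 / 2) * (proj (((P - 1) * Φ).mulVec θ) ⬝ᵥ
          Ξ.mulVec (proj (((P - 1) * Φ).mulVec θ))) + pinf θ)
    -- `θ = 0` is the unique minimizer of `f_∞` over `ℝ^d`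
    (hmin : ∀ θ : Fin d → ℝ, finf 0 ≤ finf θ)
    (huniq : ∀ θ : Fin d → ℝ, (∀ θ', finf θ ≤ finf θ') → θ = 0) :
    ((∀ θ : Fin d → ℝ, ψinf 0 (0 : Fin d → ℝ) ≤ ψinf θ 0) ∧
      (∀ x : Fin d → ℝ, ψinf 0 x ≤ ψinf 0 (0 : Fin d → ℝ))) ∧
    (∀ xb : Fin d → ℝ, xb ∈ Submodule.span ℝ (Set.range (fun i : Fin n => Φ i)) →
      (∃ θb : Fin d → ℝ,
        (∀ θ : Fin d → ℝ, ψinf θb xb ≤ ψinf θ xb) ∧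
        (∀ x : Fin d → ℝ, ψinf θb x ≤ ψinf θb xb)) →
      xb = 0) := by
  set B : Matrix (Fin n) (Fin d) ℝ := (P - 1) * Φ with hB
  -- the weighted inner product as a sum
  have hip : ∀ u v : Fin n → ℝ, u ⬝ᵥ Ξ.mulVec v = ∑ i, ξ i * u i * v i := by
    intro u v
    subst hΞ
    simp only [dotProduct, mulVec_diagonal]
    exact Finset.sum_congr rfl (fun i _ => by ring)
  have hsymm : ∀ u v : Fin n → ℝ, u ⬝ᵥ Ξ.mulVec v = v ⬝ᵥ Ξ.mulVec u := by
    intro u v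
    rw [hip, hip]
    exact Finset.sum_congr rfl (fun i _ => by ring)
  have hnonneg : ∀ v : Fin n → ℝ, 0 ≤ v ⬝ᵥ Ξ.mulVec v := by
    intro v
    rw [hip]
    exact Finset.sum_nonneg fun i _ => by nlinarith [(hξ i).le, sq_nonneg (v i)]
  have hzero : ∀ v : Fin n → ℝ, v ⬝ᵥ Ξ.mulVec v = 0 → v = 0 := by
    intro v hv
    rw [hip] at hv
    funext i
    have h1 : ∀ j ∈ Finset.univ, 0 ≤ ξ j * v j * v j :=
      fun j _ => by nlinarith [(hξ j).le, sq_nonneg (v j)]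
    have h2 := (Finset.sum_eq_zero_iff_of_nonneg h1).mp hv i (Finset.mem_univ i)
    show v i = 0
    by_contra hvi
    have hpos : 0 < v i * v i := mul_self_pos.mpr hvi
    nlinarith [hξ i]
  have hsub2 : ∀ (u a b : Fin n → ℝ),
      u ⬝ᵥ Ξ.mulVec (a - b) = u ⬝ᵥ Ξ.mulVec a - u ⬝ᵥ Ξ.mulVec b := by
    intro u a b
    rw [Matrix.mulVec_sub, dotProduct_sub]
  have hsmul2 : ∀ (c : ℝ) (u a : Fin n → ℝ),
      u ⬝ᵥ Ξ.mulVec (c • a) = c * (u ⬝ᵥ Ξ.mulVec a) := by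
    intro c u a
    rw [Matrix.mulVec_smul, dotProduct_smul, smul_eq_mul]
  have hsmul1 : ∀ (c : ℝ) (u a : Fin n → ℝ),
      (c • u) ⬝ᵥ Ξ.mulVec a = c * (u ⬝ᵥ Ξ.mulVec a) := by
    intro c u a
    rw [smul_dotProduct, smul_eq_mul]
  -- uniqueness of the projection
  have huniqproj : ∀ (v w : Fin n → ℝ), (∃ θ, w = Φ.mulVec θ) →
      (∀ θ : Fin d → ℝ, Φ.mulVec θ ⬝ᵥ Ξ.mulVec (v - w) = 0) → w = proj v := by
    rintro v w ⟨θ1, rfl⟩ horth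
    obtain ⟨θ0, hθ0⟩ := hproj_mem v
    have hδ : Φ.mulVec θ1 - proj v = Φ.mulVec (θ1 - θ0) := by
      rw [Matrix.mulVec_sub, hθ0]
    have h1 := hproj_orth v (θ1 - θ0)
    have h2 := horth (θ1 - θ0)
    have h3 : Φ.mulVec (θ1 - θ0) ⬝ᵥ Ξ.mulVec (Φ.mulVec θ1 - proj v) = 0 := by
      have : Φ.mulVec θ1 - proj v = (v - proj v) - (v - Φ.mulVec θ1) := by abel
      rw [this, hsub2, h1, h2, sub_zero]
    rw [hδ] at h3
    have h4 := hzero _ h3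
    have h5 : Φ.mulVec θ1 - proj v = 0 := by rw [hδ, h4]
    exact sub_eq_zero.mp h5
  have hproj0 : proj 0 = 0 := by
    symm
    apply huniqproj 0 0 ⟨0, by rw [Matrix.mulVec_zero]⟩
    intro θ
    simp
  have hprojsmul : ∀ (c : ℝ) (v : Fin n → ℝ), proj (c • v) = c • proj v := by
    intro c v
    symm
    apply huniqproj
    · obtain ⟨θ0, hθ0⟩ := hproj_mem v
      exact ⟨c • θ0, by rw [hθ0, Matrix.mulVec_smul]⟩
    · intro θ
      have : c • v - c • proj v = c • (v - proj v) := by rw [smul_sub]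
      rw [this, hsmul2, hproj_orth, mul_zero]
  -- completion of square
  have hsq : ∀ a b : Fin n → ℝ,
      0 ≤ a ⬝ᵥ Ξ.mulVec a - 2 * (a ⬝ᵥ Ξ.mulVec b) + b ⬝ᵥ Ξ.mulVec b := by
    intro a b
    have h1 : (a - b) ⬝ᵥ Ξ.mulVec (a - b)
        = a ⬝ᵥ Ξ.mulVec a - 2 * (a ⬝ᵥ Ξ.mulVec b) + b ⬝ᵥ Ξ.mulVec b := by
      simp only [hip, Pi.sub_apply]
      rw [Finset.mul_sum, ← Finset.sum_sub_distrib, ← Finset.sum_add_distrib]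
      exact Finset.sum_congr rfl (fun i _ => by ring)
    rw [← h1]
    exact hnonneg _
  -- ψ θ x ≤ f θ for all θ, x
  have hkey : ∀ θ x : Fin d → ℝ, ψinf θ x ≤ finf θ := by
    intro θ x
    rw [hψinf, hfinf]
    set v := B.mulVec θ
    set w := proj v
    set u := Φ.mulVec x
    have h0 : u ⬝ᵥ Ξ.mulVec (v - w) = 0 := hproj_orth v x
    have h1 : u ⬝ᵥ Ξ.mulVec v = u ⬝ᵥ Ξ.mulVec w := by
      rw [hsub2] at h0; linarith
    have h2 := hsq u w
    have h3 : u ⬝ᵥ Ξ.mulVec w = w ⬝ᵥ Ξ.mulVec u := hsymm u w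
    rw [h1]
    nlinarith [hsq u w]
  -- if Φ x = proj (B θ) then ψ θ x = f θ
  have heq : ∀ θ x : Fin d → ℝ, Φ.mulVec x = proj (B.mulVec θ) → ψinf θ x = finf θ := by
    intro θ x hx
    rw [hψinf, hfinf]
    set v := B.mulVec θ
    obtain ⟨θ0, hθ0⟩ := hproj_mem v
    have h0 : proj v ⬝ᵥ Ξ.mulVec (v - proj v) = 0 := by
      nth_rewrite 1 [hθ0]
      exact hproj_orth v θ0
    rw [hsub2] at h0
    rw [hx]
    show proj v ⬝ᵥ Ξ.mulVec v - 1/2 * (proj v ⬝ᵥ Ξ.mulVec (proj v)) + pinf θ = _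
    linarith
  -- f 0 = pinf 0
  have hf0 : finf 0 = pinf 0 := by
    rw [hfinf]
    rw [show B.mulVec 0 = 0 from Matrix.mulVec_zero B, hproj0]
    simp
  -- pinf 0 ≤ pinf θ
  have hp0 : ∀ θ : Fin d → ℝ, pinf 0 ≤ pinf θ := by
    intro θ
    set q : ℝ := proj (B.mulVec θ) ⬝ᵥ Ξ.mulVec (proj (B.mulVec θ)) with hq
    have hqnn : 0 ≤ q := hnonneg _
    have hstep : ∀ t : ℝ, 0 < t → t ≤ 1 → pinf 0 - pinf θ ≤ t * (1/2 * q) := by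
      intro t ht0 ht1
      have hft := hmin (t • θ)
      rw [hf0, hfinf] at hft
      have hBt : B.mulVec (t • θ) = t • B.mulVec θ := Matrix.mulVec_smul B t θ
      have hprojt : proj (B.mulVec (t • θ)) = t • proj (B.mulVec θ) := by
        rw [hBt, hprojsmul]
      rw [hprojt, hsmul1, hsmul2] at hft
      have hconv := hpinf_conv.2 (Set.mem_univ θ) (Set.mem_univ (0 : Fin d → ℝ))
        (le_of_lt ht0) (by linarith : (0:ℝ) ≤ 1 - t) (by ring)
      simp only [smul_zero, add_zero, smul_eq_mul] at hconv
      have : pinf (t • θ) ≤ t * pinf θ + (1 - t) * pinf 0 := hconv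
      nlinarith
    have := aux_le_zero (pinf 0 - pinf θ) (1/2 * q) (by linarith) hstep
    linarith
  constructor
  · constructor
    · intro θ
      have h1 : ψinf 0 0 = pinf 0 := by
        rw [hψinf]
        simp
      have h2 : ψinf θ 0 = pinf θ := by
        rw [hψinf]
        simp
      rw [h1, h2]; exact hp0 θ
    · intro x
      have h1 : ψinf 0 0 = pinf 0 := by rw [hψinf]; simp
      rw [hψinf, h1]
      rw [show B.mulVec 0 = 0 from Matrix.mulVec_zero B]
      simp only [Matrix.mulVec_zero, dotProduct_zero]
      nlinarith [hnonneg (Φ.mulVec x)]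
  · rintro xb hxb ⟨θb, hsad1, hsad2⟩
    -- step A : Φ xb = proj (B θb)
    set v := B.mulVec θb with hv
    have hA : Φ.mulVec xb = proj v := by
      apply huniqproj v _ ⟨xb, rfl⟩
      intro x
      set e := Φ.mulVec x with he
      set u0 := Φ.mulVec xb with hu0
      set c : ℝ := e ⬝ᵥ Ξ.mulVec (v - u0) with hc
      set a : ℝ := e ⬝ᵥ Ξ.mulVec e with ha
      have hann : 0 ≤ a := hnonneg e
      have hexpand : ∀ t : ℝ, ψinf θb (xb + t • x)
          = ψinf θb xb + t * c - t^2 / 2 * a := by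
        intro t
        rw [hψinf, hψinf]
        have h1 : Φ.mulVec (xb + t • x) = u0 + t • e := by
          rw [Matrix.mulVec_add, Matrix.mulVec_smul]
        rw [h1]
        rw [add_dotProduct, hsmul1]
        have h2 : (u0 + t • e) ⬝ᵥ Ξ.mulVec (u0 + t • e)
            = u0 ⬝ᵥ Ξ.mulVec u0 + 2 * t * (e ⬝ᵥ Ξ.mulVec u0) + t^2 * a := by
          rw [add_dotProduct, hsmul1, Matrix.mulVec_add, dotProduct_add,
            dotProduct_add, Matrix.mulVec_smul, dotProduct_smul, dotProduct_smul,
            smul_eq_mul, smul_eq_mul, hsymm u0 e]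
          ring
        rw [h2, hc, hsub2]
        ring
      have hcle : ∀ t : ℝ, 0 < t → t ≤ 1 → c ≤ t * (a / 2) := by
        intro t ht0 ht1
        have := hsad2 (xb + t • x)
        rw [hexpand t] at this
        have h3 : t * c ≤ t^2 / 2 * a := by linarith
        have h4 : t * c ≤ t * (t * (a/2)) := by nlinarith
        exact le_of_mul_le_mul_left (by linarith [h4]) ht0
      have hcge : ∀ t : ℝ, 0 < t → t ≤ 1 → -c ≤ t * (a / 2) := by
        intro t ht0 ht1
        have := hsad2 (xb + (-t) • x)
        rw [hexpand (-t)] at this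
        have h3 : -(t * c) ≤ t^2 / 2 * a := by nlinarith
        have h4 : t * (-c) ≤ t * (t * (a/2)) := by nlinarith
        exact le_of_mul_le_mul_left (by linarith [h4]) ht0
      have h5 := aux_le_zero c (a/2) (by linarith) hcle
      have h6 := aux_le_zero (-c) (a/2) (by linarith) hcge
      have h7 : c = 0 := by linarith
      exact h7
    -- step B : θb = 0
    have hfb : ∀ θ, finf θb ≤ finf θ := by
      intro θ
      calc finf θb = ψinf θb xb := (heq θb xb hA).symm
        _ ≤ ψinf θ xb := hsad1 θ
        _ ≤ finf θ := hkey θ xb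
    have hθb0 : θb = 0 := huniq θb hfb
    have hΦxb : Φ.mulVec xb = 0 := by
      rw [hA, hv, hθb0, Matrix.mulVec_zero, hproj0]
    -- step C : xb = 0 since xb in the row space
    rw [Submodule.mem_span_range_iff_exists_fun] at hxb
    obtain ⟨cc, hcc⟩ := hxb
    have hvm : Matrix.vecMul cc Φ = xb := by
      funext j
      rw [← hcc]
      simp [Matrix.vecMul, dotProduct, Finset.sum_apply]
    have hdz : xb ⬝ᵥ xb = 0 := by
      calc xb ⬝ᵥ xb = Matrix.vecMul cc Φ ⬝ᵥ xb := by rw [hvm]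
        _ = cc ⬝ᵥ Φ.mulVec xb := (Matrix.dotProduct_mulVec cc Φ xb).symm
        _ = 0 := by rw [hΦxb, dotProduct_zero]
    exact dotProduct_self_eq_zero.mp hdz
end

section
/- Let θ̄ ∈ ℝ^d, let ℓ ∈ ℝ with ℓ > inf_{x ∈ ℝ^d} ψ*(x), and set D = {x ∈ ℝ^d : ψ*(x) ≤ ℓ}. Suppose ‖∇ψ*(x)‖₂ ≥ ‖θ̄‖₂ for every point x on the topological boundary of D. Then there exists a point x̄ ∈ D with ∇ψ*(x̄) = θ̄. -/
/-!
Minimise `x ↦ ψ*(x) - ⟪θ̄, x⟫` over the sublevel set `D`, which is compact by co-finiteness.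
At a minimiser `x̄`, the direction `v = θ̄ - ∇ψ*(x̄)` decreases the objective to first order at
rate `‖v‖²`, so it must leave `D` immediately unless `v = 0`. It does not: this is clear if `x̄` is
interior, and on the boundary `‖∇ψ*(x̄) + v‖ = ‖θ̄‖ ≤ ‖∇ψ*(x̄)‖` forces `⟪∇ψ*(x̄), v⟫ < 0` for
`v ≠ 0`, so `ψ*` itself decreases along `v`.
-/

open Filter Topology Bornology RealInnerProductSpace

section Normed

variable {E : Type*} [NormedAddCommGroup E]

lemma tendsto_cobounded_atTop_of_div_norm {f : E → ℝ}
    (h : Tendsto (fun x => f x / ‖x‖) (comap norm atTop) atTop) :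
    Tendsto f (cobounded E) atTop := by
  rw [comap_norm_atTop] at h
  refine (h.atTop_mul_atTop₀ tendsto_norm_cobounded_atTop).congr' ?_
  filter_upwards [tendsto_norm_cobounded_atTop.eventually_gt_atTop 0] with x hx
  field_simp

lemma isCompact_setOf_le_of_tendsto_cobounded [ProperSpace E] {f : E → ℝ} (hf : Continuous f)
    (h : Tendsto f (cobounded E) atTop) (ℓ : ℝ) : IsCompact {x | f x ≤ ℓ} := by
  refine Metric.isCompact_of_isClosed_isBounded (isClosed_le hf continuous_const) ?_
  rw [isBounded_def]
  filter_upwards [h.eventually_gt_atTop ℓ] with x hx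
  simpa using hx

variable [NormedSpace ℝ E]

lemma HasLineDerivAt.eventually_lt_of_neg {f : E → ℝ} {f' : ℝ} {x v : E}
    (h : HasLineDerivAt ℝ f f' x v) (hf' : f' < 0) :
    ∀ᶠ t in 𝓝[>] (0 : ℝ), f (x + t • v) < f x := by
  filter_upwards [h.tendsto_slope_zero_right.eventually (gt_mem_nhds hf'), self_mem_nhdsWithin]
    with t hslope ht
  exact sub_neg.1 <| (smul_neg_iff_of_pos_left (inv_pos.2 ht)).1 hslope

lemma eventually_add_smul_mem_of_mem_interior {s : Set E} {x : E} (hx : x ∈ interior s) (v : E) :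
    ∀ᶠ t in 𝓝 (0 : ℝ), x + t • v ∈ s :=
  (Continuous.tendsto' (f := fun t : ℝ => x + t • v) (by fun_prop) 0 x (by simp)).eventually
    (mem_interior_iff_mem_nhds.1 hx)

lemma IsMinOn.hasFDerivAt_nonneg_of_eventually_add_smul_mem {f : E → ℝ} {f' : StrongDual ℝ E}
    {s : Set E} {x v : E} (hmin : IsMinOn f s x) (hf : HasFDerivAt f f' x)
    (hv : ∀ᶠ t in 𝓝[>] (0 : ℝ), x + t • v ∈ s) : 0 ≤ f' v :=
  hmin.localize.hasFDerivWithinAt_nonneg hf.hasFDerivWithinAt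
    (mem_posTangentConeAt_of_frequently_mem hv.frequently)

end Normed

lemma inner_neg_of_norm_add_le {F : Type*} [NormedAddCommGroup F] [InnerProductSpace ℝ F]
    {g v : F} (h : ‖g + v‖ ≤ ‖g‖) (hv : v ≠ 0) : ⟪g, v⟫ < 0 := by
  have hsq : ‖g + v‖ ^ 2 ≤ ‖g‖ ^ 2 := pow_le_pow_left₀ (norm_nonneg _) h 2
  rw [norm_add_sq_real] at hsq
  nlinarith [norm_pos_iff.2 hv]

theorem stmt_16_general
    (d : ℕ)
    (ψs : EuclideanSpace ℝ (Fin d) → ℝ)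
    (gradψs : EuclideanSpace ℝ (Fin d) → EuclideanSpace ℝ (Fin d))
    (hψs_grad : ∀ x, HasGradientAt ψs (gradψs x) x)
    -- co-finiteness: `ψ*(x)/‖x‖₂ → +∞` as `‖x‖₂ → +∞`
    (hcofin : Filter.Tendsto (fun x : EuclideanSpace ℝ (Fin d) => ψs x / ‖x‖)
      (Filter.comap (fun x : EuclideanSpace ℝ (Fin d) => ‖x‖) Filter.atTop) Filter.atTop)
    (θb : EuclideanSpace ℝ (Fin d))
    (ℓ : ℝ) (hℓ : sInf (Set.range ψs) < ℓ)
    (D : Set (EuclideanSpace ℝ (Fin d)))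
    (hD : D = {x : EuclideanSpace ℝ (Fin d) | ψs x ≤ ℓ})
    (hbd : ∀ x ∈ frontier D, ‖θb‖ ≤ ‖gradψs x‖) :
    ∃ xb ∈ D, gradψs xb = θb := by
  have hcont : Continuous ψs := continuous_iff_continuousAt.2 fun x => (hψs_grad x).continuousAt
  have hDcompact : IsCompact D := hD ▸ isCompact_setOf_le_of_tendsto_cobounded hcont
    (tendsto_cobounded_atTop_of_div_norm hcofin) ℓ
  obtain ⟨x₀, hx₀⟩ := exists_lt_of_ciInf_lt hℓ
  obtain ⟨xb, hxb, hmin⟩ := hDcompact.exists_isMinOn ⟨x₀, hD ▸ hx₀.le⟩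
    (hcont.sub (innerSL ℝ θb).continuous).continuousOn
  refine ⟨xb, hxb, ?_⟩
  set g := gradψs xb
  by_contra hne
  have hv : θb - g ≠ 0 := sub_ne_zero.2 (Ne.symm hne)
  have hmove : ∀ᶠ t in 𝓝[>] (0 : ℝ), xb + t • (θb - g) ∈ D := by
    by_cases hint : xb ∈ interior D
    · exact nhdsWithin_le_nhds (eventually_add_smul_mem_of_mem_interior hint _)
    · have hdescent : ⟪g, θb - g⟫ < 0 :=
        inner_neg_of_norm_add_le (by simpa using hbd xb ⟨subset_closure hxb, hint⟩) hv
      filter_upwards [((hψs_grad xb).hasFDerivAt.hasLineDerivAt _).eventually_lt_of_neg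
        hdescent] with t ht
      rw [hD] at hxb ⊢
      exact (ht.trans_le hxb).le
  have hfirst := hmin.hasFDerivAt_nonneg_of_eventually_add_smul_mem
    ((hψs_grad xb).hasFDerivAt.sub (innerSL ℝ θb).hasFDerivAt) hmove
  rw [sub_apply, InnerProductSpace.toDual_apply_apply, innerSL_apply_apply, ← inner_sub_left,
    ← neg_sub, inner_neg_left, neg_nonneg] at hfirst
  exact hv (real_inner_self_nonpos.1 hfirst)

/-- Let `ψ*` be convex, differentiable and co-finite, let `θ̄ ∈ ℝ^d`, let
`ℓ > inf ψ*`, and set `D = {x : ψ*(x) ≤ ℓ}`.  If `‖∇ψ*(x)‖₂ ≥ ‖θ̄‖₂` on the boundary of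
`D`, then there exists `x̄ ∈ D` with `∇ψ*(x̄) = θ̄`. -/
theorem stmt_16
    (d : ℕ)
    (ψs : EuclideanSpace ℝ (Fin d) → ℝ)
    (hψs_conv : ConvexOn ℝ Set.univ ψs)
    (gradψs : EuclideanSpace ℝ (Fin d) → EuclideanSpace ℝ (Fin d))
    (hψs_grad : ∀ x, HasGradientAt ψs (gradψs x) x)
    -- co-finiteness: `ψ*(x)/‖x‖₂ → +∞` as `‖x‖₂ → +∞`
    (hcofin : Filter.Tendsto (fun x : EuclideanSpace ℝ (Fin d) => ψs x / ‖x‖)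
      (Filter.comap (fun x : EuclideanSpace ℝ (Fin d) => ‖x‖) Filter.atTop) Filter.atTop)
    (θb : EuclideanSpace ℝ (Fin d))
    (ℓ : ℝ) (hℓ : sInf (Set.range ψs) < ℓ)
    (D : Set (EuclideanSpace ℝ (Fin d)))
    (hD : D = {x : EuclideanSpace ℝ (Fin d) | ψs x ≤ ℓ})
    (hbd : ∀ x ∈ frontier D, ‖θb‖ ≤ ‖gradψs x‖) :
    ∃ xb ∈ D, gradψs xb = θb :=
  stmt_16_general d ψs gradψs hψs_grad hcofin θb ℓ hℓ D hD hbd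
end

section
/- Let f : ℝ^d → ℝ be convex and differentiable and let B ⊆ ℝ^d be nonempty, compact and convex. Then for every ε > 0 there exists η > 0 such that for every θ ∈ B with f(θ) ≥ inf_{θ'∈B} f(θ') + ε and every v ∈ N_B(θ), one has ‖∇f(θ) + v‖₂² ≥ η. -/
open scoped RealInnerProductSpace

/-! By the gradient inequality, `∇f(θ) + v` is a subgradient of `f` on `B` whenever `v` lies in the
normal cone of `B` at `θ`. Comparing with a minimiser `θ*` of `f` on `B` (which exists by
compactness) gives `ε ≤ f θ - f θ* ≤ ⟪∇f(θ) + v, θ - θ*⟫ ≤ ‖∇f(θ) + v‖ · diam B`, so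
`η = (ε / (diam B + 1))²` works; the `+ 1` only guards against `diam B = 0`. -/

theorem ConvexOn.add_le_of_hasFDerivAt {E : Type*} [NormedAddCommGroup E] [NormedSpace ℝ E]
    {S : Set E} {f : E → ℝ} {f' : E →L[ℝ] ℝ} {x y : E} (hf : ConvexOn ℝ S f)
    (hx : x ∈ S) (hy : y ∈ S) (hf' : HasFDerivAt f f' x) :
    f x + f' (y - x) ≤ f y := by
  have hline : ConvexOn ℝ (AffineMap.lineMap x y ⁻¹' S) (f ∘ AffineMap.lineMap x y) :=
    hf.comp_affineMap _
  have hderiv : HasDerivAt (f ∘ AffineMap.lineMap x y) (f' (y - x)) (0 : ℝ) :=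
    hf'.comp_hasDerivAt_of_eq 0 AffineMap.hasDerivAt_lineMap
      (AffineMap.lineMap_apply_zero x y).symm
  have hslope := hline.le_slope_of_hasDerivAt (x := 0) (y := 1)
    (by simpa using hx) (by simpa using hy) one_pos hderiv
  simp only [slope_def_field, Function.comp_apply, AffineMap.lineMap_apply_zero,
    AffineMap.lineMap_apply_one, sub_zero, div_one] at hslope
  linarith

theorem ConvexOn.add_inner_le_of_hasGradientAt_of_mem_normalCone
    {E : Type*} [NormedAddCommGroup E] [InnerProductSpace ℝ E] [CompleteSpace E]
    {S : Set E} {f : E → ℝ} {g v θ x : E} (hf : ConvexOn ℝ S f)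
    (hθ : θ ∈ S) (hx : x ∈ S) (hg : HasGradientAt f g θ) (hv : ⟪v, x - θ⟫ ≤ 0) :
    f θ + ⟪g + v, x - θ⟫ ≤ f x := by
  have hgrad := hf.add_le_of_hasFDerivAt hθ hx hg.hasFDerivAt
  rw [InnerProductSpace.toDual_apply_apply] at hgrad
  rw [inner_add_left]
  linarith

theorem stmt_18_general
    (d : ℕ)
    (f : EuclideanSpace ℝ (Fin d) → ℝ)
    (hf_conv : ConvexOn ℝ Set.univ f)
    (gradf : EuclideanSpace ℝ (Fin d) → EuclideanSpace ℝ (Fin d))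
    (hf_grad : ∀ x, HasGradientAt f (gradf x) x)
    (B : Set (EuclideanSpace ℝ (Fin d)))
    (hB_cpt : IsCompact B) :
    ∀ ε : ℝ, 0 < ε → ∃ η : ℝ, 0 < η ∧
      ∀ θ ∈ B, sInf (f '' B) + ε ≤ f θ →
        ∀ v : EuclideanSpace ℝ (Fin d),
          (∀ x ∈ B, ⟪v, x - θ⟫ ≤ 0) → η ≤ ‖gradf θ + v‖ ^ 2 := by
  intro ε hε
  have hM : 0 < Metric.diam B + 1 := by positivity
  refine ⟨(ε / (Metric.diam B + 1)) ^ 2, by positivity, fun θ hθ hfθ v hv => ?_⟩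
  have hfc : Continuous f := continuous_iff_continuousAt.2 fun x => (hf_grad x).continuousAt
  obtain ⟨θmin, hθmin, hmin⟩ := hB_cpt.exists_isMinOn ⟨θ, hθ⟩ hfc.continuousOn
  have hinf : f θmin ≤ sInf (f '' B) :=
    le_csInf ⟨f θ, θ, hθ, rfl⟩ (Set.forall_mem_image.2 fun x hx => hmin hx)
  have hsub := hf_conv.add_inner_le_of_hasGradientAt_of_mem_normalCone
    (Set.mem_univ θ) (Set.mem_univ θmin) (hf_grad θ) (hv θmin hθmin)
  have hdist : ‖θmin - θ‖ ≤ Metric.diam B := by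
    rw [← dist_eq_norm]; exact Metric.dist_le_diam_of_mem hB_cpt.isBounded hθmin hθ
  have hε : ε ≤ ‖gradf θ + v‖ * (Metric.diam B + 1) :=
    calc ε ≤ -⟪gradf θ + v, θmin - θ⟫ := by linarith
      _ ≤ ‖gradf θ + v‖ * ‖θmin - θ‖ := (neg_le_abs _).trans (abs_real_inner_le_norm _ _)
      _ ≤ ‖gradf θ + v‖ * (Metric.diam B + 1) := by gcongr; linarith
  exact pow_le_pow_left₀ (by positivity) ((div_le_iff₀ hM).2 hε) 2

/-- Let `f : ℝ^d → ℝ` be convex and differentiable and let `B` be nonempty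
compact convex.  Then for every `ε > 0` there exists `η > 0` such that for every `θ ∈ B` with
`f(θ) ≥ inf_B f + ε` and every `v ∈ N_B(θ)`, one has `‖∇f(θ) + v‖₂² ≥ η`. -/
theorem stmt_18
    (d : ℕ)
    (f : EuclideanSpace ℝ (Fin d) → ℝ)
    (hf_conv : ConvexOn ℝ Set.univ f)
    (gradf : EuclideanSpace ℝ (Fin d) → EuclideanSpace ℝ (Fin d))
    (hf_grad : ∀ x, HasGradientAt f (gradf x) x)
    (B : Set (EuclideanSpace ℝ (Fin d)))
    (hB_ne : B.Nonempty) (hB_cpt : IsCompact B) (hB_conv : Convex ℝ B) :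
    ∀ ε : ℝ, 0 < ε → ∃ η : ℝ, 0 < η ∧
      ∀ θ ∈ B, sInf (f '' B) + ε ≤ f θ →
        ∀ v : EuclideanSpace ℝ (Fin d),
          (∀ x ∈ B, ⟪v, x - θ⟫ ≤ 0) → η ≤ ‖gradf θ + v‖ ^ 2 :=
  stmt_18_general d f hf_conv gradf hf_grad B hB_cpt
end

section
/- Let A_i → A (real d×d matrices) and b_i → b (vectors in ℝ^d) as i → ∞. Then sup_{(θ,x) ∈ B_θ × B_x} |ψ_{A_i,b_i}(θ,x) − ψ_{A,b}(θ,x)| → 0 as i → ∞, and for every ε > 0 there exists i₀ such that for all i ≥ i₀ the saddle set S_{A_i,b_i} is contained in the ε-neighborhood of the saddle set S_{A,b} (with respect to the Euclidean distance on ℝ^d × ℝ^d). -/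
open Matrix

/-!
The objective `ψ_{A',b'}(θ, x)` is jointly continuous in `(A', b', θ, x)`, so on the compact set
`B_θ × B_x` it converges uniformly as the parameters converge. For the saddle sets, the graph
`{((A', b'), q) | q ∈ S_{A',b'}}` is closed, being cut out by non-strict inequalities between
continuous functions and by closed constraints. Since all saddle sets lie in the compact set
`B_θ × B_x`, a closed graph forces upper semicontinuity: for parameters near `(A, b)`, the saddle
set lies in any given open neighbourhood of `S_{A,b}`, in particular in its `ε`-neighbourhood.
-/

open Filter Topology Set

section

variable {ι P Z : Type*} [TopologicalSpace P] [TopologicalSpace Z]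

theorem tendstoUniformlyOn_of_continuous_of_tendsto {E : Type*} [UniformSpace E]
    {g : P → Z → E} (hg : Continuous ↿g) {K : Set Z} (hK : IsCompact K) {l : Filter ι}
    {a : ι → P} {a₀ : P} (ha : Tendsto a l (𝓝 a₀)) :
    TendstoUniformlyOn (fun i => g (a i)) (g a₀) l K := by
  intro u hu
  obtain ⟨v, hv, hvu⟩ :=
    hK.mem_uniformity_of_prod hg.continuousOn (mem_univ a₀) (tendsto_swap_uniformity hu)
  rw [nhdsWithin_univ] at hv
  filter_upwards [ha hv] with i hi x hx using hvu _ hi x hx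

theorem eventually_subset_of_isClosed_graph {S : P → Set Z} {K : Set Z} (hK : IsCompact K)
    (hSK : ∀ a, S a ⊆ K) (hS : IsClosed {z : P × Z | z.2 ∈ S z.1}) {U : Set Z} (hU : IsOpen U)
    {a₀ : P} (hU₀ : S a₀ ⊆ U) : ∀ᶠ a in 𝓝 a₀, S a ⊆ U := by
  have hK_eventually : ∀ᶠ a in 𝓝 a₀, ∀ y ∈ K, y ∈ S a → y ∈ U := by
    refine hK.eventually_forall_of_forall_eventually fun y _ => ?_
    by_cases hy : y ∈ U
    · filter_upwards [continuous_snd.continuousAt.preimage_mem_nhds (hU.mem_nhds hy)]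
        with z hz _ using hz
    · have hy' : (a₀, y) ∈ {z : P × Z | z.2 ∈ S z.1}ᶜ := fun h => hy (hU₀ h)
      filter_upwards [hS.isOpen_compl.mem_nhds hy'] with z hz hz' using absurd hz' hz
  filter_upwards [hK_eventually] with a ha y hy using ha y (hSK a hy) hy

theorem isClosed_setOf_saddle {α β : Type*} [TopologicalSpace α] [TopologicalSpace β]
    {f : P → α → β → ℝ} (hf : Continuous fun z : P × α × β => f z.1 z.2.1 z.2.2)
    {s : Set α} {t F : Set β} (hs : IsClosed s) (ht : IsClosed t) (hF : IsClosed F) :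
    IsClosed {z : P × α × β | z.2.1 ∈ s ∧ z.2.2 ∈ t ∧ z.2.2 ∈ F ∧
      (∀ θ ∈ s, f z.1 z.2.1 z.2.2 ≤ f z.1 θ z.2.2) ∧
      (∀ x ∈ t, f z.1 z.2.1 x ≤ f z.1 z.2.1 z.2.2)} := by
  simp only [ofPred_and, ofPred_forall]
  refine (hs.preimage (by fun_prop)).inter <| (ht.preimage (by fun_prop)).inter <|
    (hF.preimage (by fun_prop)).inter <| .inter ?_ ?_
  · refine isClosed_iInter fun θ => isClosed_iInter fun _ => isClosed_le hf ?_
    exact hf.comp (continuous_fst.prodMk (continuous_const.prodMk continuous_snd.snd))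
  · refine isClosed_iInter fun x => isClosed_iInter fun _ => isClosed_le ?_ hf
    exact hf.comp (continuous_fst.prodMk (continuous_snd.fst.prodMk continuous_const))

end

theorem stmt_19_general
    (n d : ℕ) (Φ : Matrix (Fin n) (Fin d) ℝ)
    (C : Matrix (Fin d) (Fin d) ℝ)
    (p : (Fin d → ℝ) → ℝ)
    (hp_diff : Differentiable ℝ p)
    (Bθ Bx : Set (Fin d → ℝ))
    (hBθ_cpt : IsCompact Bθ)
    (hBx_cpt : IsCompact Bx)
    -- `ψ_{A',b'}(θ,x) = xᵀ(A'θ + b') − ½xᵀCx + p(θ)`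
    (ψ : Matrix (Fin d) (Fin d) ℝ → (Fin d → ℝ) → (Fin d → ℝ) → (Fin d → ℝ) → ℝ)
    (hψ : ∀ (A' : Matrix (Fin d) (Fin d) ℝ) (b' θ x : Fin d → ℝ),
      ψ A' b' θ x = x ⬝ᵥ (A'.mulVec θ + b') - (1 / 2) * (x ⬝ᵥ C.mulVec x) + p θ)
    -- `S_{A',b'}` is the set of saddle points whose second component lies in `span{φ(S)}`
    (Sdl : Matrix (Fin d) (Fin d) ℝ → (Fin d → ℝ) → Set ((Fin d → ℝ) × (Fin d → ℝ)))
    (hSdl : ∀ (A' : Matrix (Fin d) (Fin d) ℝ) (b' : Fin d → ℝ),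
      Sdl A' b' = {q : (Fin d → ℝ) × (Fin d → ℝ) |
        q.1 ∈ Bθ ∧ q.2 ∈ Bx ∧
        q.2 ∈ Submodule.span ℝ (Set.range (fun i : Fin n => Φ i)) ∧
        (∀ θ ∈ Bθ, ψ A' b' q.1 q.2 ≤ ψ A' b' θ q.2) ∧
        (∀ x ∈ Bx, ψ A' b' q.1 x ≤ ψ A' b' q.1 q.2)})
    (A : ℕ → Matrix (Fin d) (Fin d) ℝ) (b : ℕ → Fin d → ℝ)
    (Alim : Matrix (Fin d) (Fin d) ℝ) (blim : Fin d → ℝ)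
    (hA : Filter.Tendsto A Filter.atTop (nhds Alim))
    (hb : Filter.Tendsto b Filter.atTop (nhds blim)) :
    TendstoUniformlyOn
      (fun (i : ℕ) (q : (Fin d → ℝ) × (Fin d → ℝ)) => ψ (A i) (b i) q.1 q.2)
      (fun q => ψ Alim blim q.1 q.2) Filter.atTop (Bθ ×ˢ Bx) ∧
    (∀ ε : ℝ, 0 < ε → ∃ i₀ : ℕ, ∀ i ≥ i₀, ∀ q ∈ Sdl (A i) (b i),
      ∃ q' ∈ Sdl Alim blim,
        Real.sqrt ((q.1 - q'.1) ⬝ᵥ (q.1 - q'.1) + (q.2 - q'.2) ⬝ᵥ (q.2 - q'.2)) < ε) := by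
  have hψ_cont : Continuous fun z : (Matrix (Fin d) (Fin d) ℝ × (Fin d → ℝ)) × (Fin d → ℝ) ×
      (Fin d → ℝ) => ψ z.1.1 z.1.2 z.2.1 z.2.2 := by
    have hp := hp_diff.continuous
    simp only [hψ]
    fun_prop
  have hK : IsCompact (Bθ ×ˢ Bx) := hBθ_cpt.prod hBx_cpt
  have hAb := hA.prodMk_nhds hb
  refine ⟨tendstoUniformlyOn_of_continuous_of_tendsto (g := fun a q => ψ a.1 a.2 q.1 q.2)
    hψ_cont hK hAb, fun ε hε => ?_⟩
  set U := ⋃ q' ∈ Sdl Alim blim, {q : (Fin d → ℝ) × (Fin d → ℝ) |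
    Real.sqrt ((q.1 - q'.1) ⬝ᵥ (q.1 - q'.1) + (q.2 - q'.2) ⬝ᵥ (q.2 - q'.2)) < ε}
  have hU : IsOpen U := isOpen_biUnion fun _ _ => isOpen_lt (by fun_prop) continuous_const
  have hSdl_U : Sdl Alim blim ⊆ U := fun q hq => mem_biUnion hq (by simpa using hε)
  have hSdl_K : ∀ a : Matrix (Fin d) (Fin d) ℝ × (Fin d → ℝ), Sdl a.1 a.2 ⊆ Bθ ×ˢ Bx :=
    fun a q hq => by
      rw [hSdl] at hq
      exact ⟨hq.1, hq.2.1⟩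
  have hgraph : IsClosed {z : (Matrix (Fin d) (Fin d) ℝ × (Fin d → ℝ)) × (Fin d → ℝ) ×
      (Fin d → ℝ) | z.2 ∈ Sdl z.1.1 z.1.2} := by
    simp only [hSdl, mem_ofPred_eq]
    exact isClosed_setOf_saddle (f := fun a : Matrix (Fin d) (Fin d) ℝ × (Fin d → ℝ) => ψ a.1 a.2)
      hψ_cont hBθ_cpt.isClosed hBx_cpt.isClosed (Submodule.closed_of_finiteDimensional _)
  obtain ⟨i₀, hi₀⟩ := (hAb.eventually (eventually_subset_of_isClosed_graph
    (S := fun a => Sdl a.1 a.2) hK hSdl_K hgraph hU hSdl_U)).exists_forall_of_atTop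
  exact ⟨i₀, fun i hi q hq => by simpa [U] using hi₀ i hi hq⟩

/-- If `A_i → A` and `b_i → b`, then `ψ_{A_i,b_i} → ψ_{A,b}` uniformly on
`B_θ × B_x`, and for every `ε > 0` the saddle sets `S_{A_i,b_i}` are eventually contained in
the `ε`-neighborhood (w.r.t. the Euclidean distance on `ℝ^d × ℝ^d`) of `S_{A,b}`. -/
theorem stmt_19
    (n d : ℕ) (hn : 0 < n) (hd : 0 < d)
    (Φ : Matrix (Fin n) (Fin d) ℝ) (hΦ : Φ ≠ 0)
    (ξ : Fin n → ℝ) (hξ : ∀ i, 0 < ξ i)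
    (Ξ : Matrix (Fin n) (Fin n) ℝ) (hΞ : Ξ = Matrix.diagonal ξ)
    (C : Matrix (Fin d) (Fin d) ℝ) (hC : C = Φᵀ * Ξ * Φ)
    (p : (Fin d → ℝ) → ℝ)
    (hp_conv : ConvexOn ℝ Set.univ p) (hp_diff : Differentiable ℝ p)
    (Bθ Bx : Set (Fin d → ℝ))
    (hBθ_ne : Bθ.Nonempty) (hBθ_cpt : IsCompact Bθ) (hBθ_conv : Convex ℝ Bθ)
    (hBx_ne : Bx.Nonempty) (hBx_cpt : IsCompact Bx) (hBx_conv : Convex ℝ Bx)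
    -- `ψ_{A',b'}(θ,x) = xᵀ(A'θ + b') − ½xᵀCx + p(θ)`
    (ψ : Matrix (Fin d) (Fin d) ℝ → (Fin d → ℝ) → (Fin d → ℝ) → (Fin d → ℝ) → ℝ)
    (hψ : ∀ (A' : Matrix (Fin d) (Fin d) ℝ) (b' θ x : Fin d → ℝ),
      ψ A' b' θ x = x ⬝ᵥ (A'.mulVec θ + b') - (1 / 2) * (x ⬝ᵥ C.mulVec x) + p θ)
    -- `S_{A',b'}` is the set of saddle points whose second component lies in `span{φ(S)}`
    (Sdl : Matrix (Fin d) (Fin d) ℝ → (Fin d → ℝ) → Set ((Fin d → ℝ) × (Fin d → ℝ)))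
    (hSdl : ∀ (A' : Matrix (Fin d) (Fin d) ℝ) (b' : Fin d → ℝ),
      Sdl A' b' = {q : (Fin d → ℝ) × (Fin d → ℝ) |
        q.1 ∈ Bθ ∧ q.2 ∈ Bx ∧
        q.2 ∈ Submodule.span ℝ (Set.range (fun i : Fin n => Φ i)) ∧
        (∀ θ ∈ Bθ, ψ A' b' q.1 q.2 ≤ ψ A' b' θ q.2) ∧
        (∀ x ∈ Bx, ψ A' b' q.1 x ≤ ψ A' b' q.1 q.2)})
    (A : ℕ → Matrix (Fin d) (Fin d) ℝ) (b : ℕ → Fin d → ℝ)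
    (Alim : Matrix (Fin d) (Fin d) ℝ) (blim : Fin d → ℝ)
    (hA : Filter.Tendsto A Filter.atTop (nhds Alim))
    (hb : Filter.Tendsto b Filter.atTop (nhds blim)) :
    TendstoUniformlyOn
      (fun (i : ℕ) (q : (Fin d → ℝ) × (Fin d → ℝ)) => ψ (A i) (b i) q.1 q.2)
      (fun q => ψ Alim blim q.1 q.2) Filter.atTop (Bθ ×ˢ Bx) ∧
    (∀ ε : ℝ, 0 < ε → ∃ i₀ : ℕ, ∀ i ≥ i₀, ∀ q ∈ Sdl (A i) (b i),
      ∃ q' ∈ Sdl Alim blim,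
        Real.sqrt ((q.1 - q'.1) ⬝ᵥ (q.1 - q'.1) + (q.2 - q'.2) ⬝ᵥ (q.2 - q'.2)) < ε) :=
  stmt_19_general n d Φ C p hp_diff Bθ Bx hBθ_cpt hBx_cpt ψ hψ Sdl hSdl A b Alim blim hA hb
end
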